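/- Let μ be a tail generating measure. Then there exist weights w₀, w₁, w₂ ≥ 0 with w₀ + w₁ + w₂ = 1 and Borel probability measures μ₁ and μ₂ on (0,1) such that for every bivariate copula C admitting a tail dependence function Λ, λ_μ(C) = ( w₀·Λ(1,1) + w₁·∫_{(0,1)} Λ(t,1) dμ₁(t) + w₂·∫_{(0,1)} Λ(1,t) dμ₂(t) ) / ( w₀ + w₁·∫_{(0,1)} t dμ₁(t) + w₂·∫_{(0,1)} t dμ₂(t) ). -/

import Mathlib

open MeasureTheory Filter Set

/-- A bivariate copula: `C : [0,1]² → [0,1]` with the grounded/marginal conditions and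
the 2-increasing property. -/
def IsCopula (C : ℝ → ℝ → ℝ) : Prop :=
  (∀ u ∈ Icc (0:ℝ) 1, ∀ v ∈ Icc (0:ℝ) 1, C u v ∈ Icc (0:ℝ) 1) ∧
  (∀ u ∈ Icc (0:ℝ) 1, C u 0 = 0 ∧ C 0 u = 0 ∧ C u 1 = u ∧ C 1 u = u) ∧
  (∀ u u' v v' : ℝ, u ∈ Icc (0:ℝ) 1 → u' ∈ Icc (0:ℝ) 1 →
    v ∈ Icc (0:ℝ) 1 → v' ∈ Icc (0:ℝ) 1 → u ≤ u' → v ≤ v' →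
    0 ≤ C u' v' - C u' v - C u v' + C u v)

/-- `Λ` is the tail dependence function of `C`:
`Λ(u,v) = lim_{p↓0} C(pu,pv)/p` for every `(u,v) ∈ [0,∞)²`. -/
def HasTDF (C Λ : ℝ → ℝ → ℝ) : Prop :=
  ∀ u v : ℝ, 0 ≤ u → 0 ≤ v →
    Tendsto (fun p : ℝ => C (p * u) (p * v) / p)
      (nhdsWithin (0:ℝ) (Ioi 0)) (nhds (Λ u v))

/-- A tail generating measure: a Borel probability measure on `[0,1]²` whose mass is not
concentrated on `{u = 0} ∪ {v = 0}`. -/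
def IsTailGenMeasure (μ : Measure (ℝ × ℝ)) : Prop :=
  IsProbabilityMeasure μ ∧
  μ ((Icc (0:ℝ) 1 ×ˢ Icc (0:ℝ) 1)ᶜ) = 0 ∧
  μ {q : ℝ × ℝ | q.1 = 0 ∨ q.2 = 0} < 1

/-- The μ-tail dependence measure: `λ_μ = (∫ Λ dμ) / (∫ min dμ)`, applied to
the tail dependence function `Λ` of the copula. -/
noncomputable def tdm (Λ : ℝ → ℝ → ℝ) (μ : Measure (ℝ × ℝ)) : ℝ :=
  (∫ q, Λ q.1 q.2 ∂μ) / (∫ q : ℝ × ℝ, min q.1 q.2 ∂μ)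

/-!
A tail dependence function `Λ` is positively homogeneous, vanishes on the axes and is Lipschitz
(hence measurable). Split the open quadrant into the diagonal and the cones below and above it,
and on each piece write `q = max q • (q / max q)`, where `q / max q` is `(1, 1)`, `(1, t)` or
`(t, 1)` with `t ∈ (0,1)`. Homogeneity turns `∫ Λ dμ` over the lower cone into
`∫ q.1 * Λ 1 (q.2 / q.1) dμ`, and the push-forward of `q.1 • μ` along `q ↦ q.2 / q.1`, normalised,
is `μ₂`; the upper cone gives `μ₁` by symmetry and the diagonal the weight of `Λ 1 1`. The same
computation for `min` gives the denominator, which is positive because `μ` charges the open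
quadrant, so the weights can be normalised to sum to one.
-/

open scoped Topology

namespace IsCopula

variable {C : ℝ → ℝ → ℝ}

theorem flip (hC : IsCopula C) : IsCopula (flip C) := by
  obtain ⟨hrange, hbdry, hrect⟩ := hC
  refine ⟨fun u hu v hv => hrange v hv u hu, fun u hu => ?_, ?_⟩
  · obtain ⟨h₁, h₂, h₃, h₄⟩ := hbdry u hu
    exact ⟨h₂, h₁, h₄, h₃⟩
  · intro u u' v v' hu hu' hv hv' huu' hvv'
    have := hrect v v' u u' hv hv' hu hu' hvv' huu'
    simp only [Function.flip_def]
    linarith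

theorem mono_left (hC : IsCopula C) {u u' v : ℝ} (hu : u ∈ Icc (0:ℝ) 1)
    (hu' : u' ∈ Icc (0:ℝ) 1) (hv : v ∈ Icc (0:ℝ) 1) (h : u ≤ u') : C u v ≤ C u' v := by
  have := hC.2.2 u u' 0 v hu hu' ⟨le_rfl, zero_le_one⟩ hv h hv.1
  linarith [(hC.2.1 u hu).1, (hC.2.1 u' hu').1]

theorem sub_le_left (hC : IsCopula C) {u u' v : ℝ} (hu : u ∈ Icc (0:ℝ) 1)
    (hu' : u' ∈ Icc (0:ℝ) 1) (hv : v ∈ Icc (0:ℝ) 1) (h : u ≤ u') :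
    C u' v - C u v ≤ u' - u := by
  have := hC.2.2 u u' v 1 hu hu' hv ⟨zero_le_one, le_rfl⟩ h hv.2
  linarith [(hC.2.1 u hu).2.2.1, (hC.2.1 u' hu').2.2.1]

theorem abs_sub_le_left (hC : IsCopula C) {u u' v : ℝ} (hu : u ∈ Icc (0:ℝ) 1)
    (hu' : u' ∈ Icc (0:ℝ) 1) (hv : v ∈ Icc (0:ℝ) 1) : |C u v - C u' v| ≤ |u - u'| := by
  wlog h : u ≤ u' generalizing u u'
  · rw [abs_sub_comm, abs_sub_comm u]
    exact this hu' hu (le_of_not_ge h)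
  rw [abs_sub_comm, abs_of_nonneg (sub_nonneg.2 (hC.mono_left hu hu' hv h)),
    abs_sub_comm, abs_of_nonneg (sub_nonneg.2 h)]
  exact hC.sub_le_left hu hu' hv h

theorem abs_sub_le (hC : IsCopula C) {u u' v v' : ℝ} (hu : u ∈ Icc (0:ℝ) 1)
    (hu' : u' ∈ Icc (0:ℝ) 1) (hv : v ∈ Icc (0:ℝ) 1) (hv' : v' ∈ Icc (0:ℝ) 1) :
    |C u v - C u' v'| ≤ |u - u'| + |v - v'| :=
  calc |C u v - C u' v'| ≤ |C u v - C u' v| + |C u' v - C u' v'| := _root_.abs_sub_le _ _ _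
    _ ≤ |u - u'| + |v - v'| :=
      add_le_add (hC.abs_sub_le_left hu hu' hv) (hC.flip.abs_sub_le_left hv hv' hu')

end IsCopula

theorem eventually_mul_mem_Icc {u : ℝ} (hu : 0 ≤ u) :
    ∀ᶠ p in 𝓝[>] (0:ℝ), p * u ∈ Icc (0:ℝ) 1 := by
  have hlim : Tendsto (fun p : ℝ => p * u) (𝓝[>] 0) (𝓝 0) := by
    simpa using (tendsto_id.mul_const u).mono_left (nhdsWithin_le_nhds (a := (0:ℝ)))
  filter_upwards [self_mem_nhdsWithin, hlim.eventually (ge_mem_nhds zero_lt_one)]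
    with p hp hp1
  exact ⟨mul_nonneg (le_of_lt hp) hu, hp1⟩

def PosHomogeneous (f : ℝ → ℝ → ℝ) : Prop :=
  ∀ ⦃c⦄, 0 < c → ∀ ⦃u v⦄, 0 ≤ u → 0 ≤ v → f (c * u) (c * v) = c * f u v

theorem posHomogeneous_min : PosHomogeneous min := fun _ hc _ _ _ _ =>
  (mul_min_of_nonneg _ _ hc.le).symm

namespace HasTDF

variable {C Λ : ℝ → ℝ → ℝ}

theorem flip (hT : HasTDF C Λ) : HasTDF (flip C) (flip Λ) :=
  fun u v hu hv => hT v u hv hu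

theorem apply_zero_right (hC : IsCopula C) (hT : HasTDF C Λ) {u : ℝ} (hu : 0 ≤ u) :
    Λ u 0 = 0 := by
  refine tendsto_nhds_unique_of_eventuallyEq (hT u 0 hu le_rfl) tendsto_const_nhds ?_
  filter_upwards [eventually_mul_mem_Icc hu] with p hp
  rw [mul_zero, (hC.2.1 _ hp).1, zero_div]

theorem posHomogeneous (hT : HasTDF C Λ) : PosHomogeneous Λ := by
  intro c hc u v hu hv
  have hscale : Tendsto (c * ·) (𝓝[>] (0:ℝ)) (𝓝[>] 0) := by
    simpa only [comap_mulLeft_nhdsGT_zero hc] using tendsto_comap (f := (c * ·)) (x := 𝓝[>] 0)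
  refine tendsto_nhds_unique (hT _ _ (by positivity) (by positivity)) ?_
  refine ((hT u v hu hv).comp hscale).const_mul c |>.congr' ?_
  filter_upwards [self_mem_nhdsWithin] with p hp
  simp only [Function.comp_apply, mul_assoc]
  field_simp

theorem abs_sub_le (hC : IsCopula C) (hT : HasTDF C Λ) {u v u' v' : ℝ}
    (hu : 0 ≤ u) (hv : 0 ≤ v) (hu' : 0 ≤ u') (hv' : 0 ≤ v') :
    |Λ u v - Λ u' v'| ≤ |u - u'| + |v - v'| := by
  refine le_of_tendsto ((hT u v hu hv).sub (hT u' v' hu' hv')).abs ?_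
  filter_upwards [self_mem_nhdsWithin, eventually_mul_mem_Icc hu, eventually_mul_mem_Icc hv,
    eventually_mul_mem_Icc hu', eventually_mul_mem_Icc hv'] with p hp hpu hpv hpu' hpv'
  have hp : 0 < p := hp
  rw [div_sub_div_same, abs_div, abs_of_pos hp, div_le_iff₀ hp]
  calc |C (p * u) (p * v) - C (p * u') (p * v')| ≤ |p * u - p * u'| + |p * v - p * v'| :=
        hC.abs_sub_le hpu hpu' hpv hpv'
    _ = (|u - u'| + |v - v'|) * p := by
        rw [← mul_sub, ← mul_sub, abs_mul, abs_mul, abs_of_pos hp]; ring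

end HasTDF

theorem exists_isProbabilityMeasure_integral_eq_mul {β : Type*} [MeasurableSpace β]
    (ρ : Measure β) [IsFiniteMeasure ρ] {t : Set β} (ht : MeasurableSet t) (ht₀ : t.Nonempty)
    (hρt : ρ tᶜ = 0) :
    ∃ m : Measure β, IsProbabilityMeasure m ∧ m tᶜ = 0 ∧
      ∀ g : β → ℝ, ∫ y, g y ∂ρ = ρ.real univ * ∫ y, g y ∂m := by
  rcases eq_zero_or_neZero ρ with rfl | hρ
  · obtain ⟨y, hy⟩ := ht₀
    refine ⟨Measure.dirac y, inferInstance, ?_, fun g => by simp⟩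
    rw [Measure.dirac_apply' y ht.compl, indicator_of_notMem (notMem_compl_iff.2 hy)]
  refine ⟨(ρ univ)⁻¹ • ρ, inferInstance, by simp [hρt], fun g => ?_⟩
  rw [integral_smul_measure, smul_eq_mul, ← mul_assoc, measureReal_def, ENNReal.toReal_inv,
    mul_inv_cancel₀ (ENNReal.toReal_ne_zero.2 ⟨NeZero.ne _, measure_ne_top _ _⟩), one_mul]

theorem exists_isProbabilityMeasure_setIntegral_mul_comp {α β : Type*} [MeasurableSpace α]
    [MeasurableSpace β] (ν : Measure α) {s : Set α} (hs : MeasurableSet s) {w : α → ℝ}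
    (hw : Measurable w) (hw₀ : ∀ x ∈ s, 0 ≤ w x) (hwi : IntegrableOn w s ν) {φ : α → β}
    (hφ : Measurable φ) {t : Set β} (ht : MeasurableSet t) (ht₀ : t.Nonempty)
    (hφt : MapsTo φ s t) :
    ∃ m : Measure β, IsProbabilityMeasure m ∧ m tᶜ = 0 ∧ ∀ g : β → ℝ, Measurable g →
      ∫ x in s, w x * g (φ x) ∂ν = (∫ x in s, w x ∂ν) * ∫ y, g y ∂m := by
  set ρ := ((ν.restrict s).withDensity fun x => ENNReal.ofReal (w x)).map φ
  have : IsFiniteMeasure ((ν.restrict s).withDensity fun x => ENNReal.ofReal (w x)) :=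
    isFiniteMeasure_withDensity_ofReal hwi.2
  have hρ : ∀ g : β → ℝ, Measurable g → ∫ y, g y ∂ρ = ∫ x in s, w x * g (φ x) ∂ν := by
    intro g hg
    rw [integral_map hφ.aemeasurable hg.aestronglyMeasurable,
      integral_withDensity_eq_integral_toReal_smul (by fun_prop)
        (ae_of_all _ fun _ => ENNReal.ofReal_lt_top)]
    refine setIntegral_congr_fun hs fun x hx => ?_
    rw [ENNReal.toReal_ofReal (hw₀ x hx), smul_eq_mul]
  have hρt : ρ tᶜ = 0 := by
    refine Measure.map_apply hφ ht.compl ▸ withDensity_absolutelyContinuous _ _ ?_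
    rw [Measure.restrict_apply (hφ ht.compl), preimage_compl,
      (disjoint_compl_left_iff_subset.2 (mapsTo_iff_subset_preimage.1 hφt)).inter_eq,
      measure_empty]
  obtain ⟨m, hm, hmt, hρm⟩ := exists_isProbabilityMeasure_integral_eq_mul ρ ht ht₀ hρt
  refine ⟨m, hm, hmt, fun g hg => ?_⟩
  have hmass : ρ.real univ = ∫ x in s, w x ∂ν := by
    simpa using hρ (fun _ => 1) measurable_const
  rw [← hρ g hg, hρm g, hmass]

def diagCone : Set (ℝ × ℝ) := {q | 0 < q.1 ∧ q.1 = q.2}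

def lowerCone : Set (ℝ × ℝ) := {q | 0 < q.2 ∧ q.2 < q.1}

def upperCone : Set (ℝ × ℝ) := {q | 0 < q.1 ∧ q.1 < q.2}

theorem measurableSet_diagCone : MeasurableSet diagCone :=
  (measurableSet_lt measurable_const measurable_fst).inter
    (measurableSet_eq_fun measurable_fst measurable_snd)

theorem measurableSet_lowerCone : MeasurableSet lowerCone :=
  (measurableSet_lt measurable_const measurable_snd).inter
    (measurableSet_lt measurable_snd measurable_fst)

theorem measurableSet_upperCone : MeasurableSet upperCone :=
  (measurableSet_lt measurable_const measurable_fst).inter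
    (measurableSet_lt measurable_fst measurable_snd)

theorem mem_cones_of_pos {q : ℝ × ℝ} (h₁ : 0 < q.1) (h₂ : 0 < q.2) :
    q ∈ diagCone ∪ lowerCone ∪ upperCone := by
  rcases lt_trichotomy q.1 q.2 with h | h | h
  · exact Or.inr ⟨h₁, h⟩
  · exact Or.inl (Or.inl ⟨h₁, h⟩)
  · exact Or.inl (Or.inr ⟨h₂, h⟩)

theorem setIntegral_diagCone (ν : Measure (ℝ × ℝ)) {f : ℝ → ℝ → ℝ} (hf : PosHomogeneous f) :
    ∫ q in diagCone, f q.1 q.2 ∂ν = (∫ q in diagCone, q.1 ∂ν) * f 1 1 := by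
  rw [← integral_mul_const]
  refine setIntegral_congr_fun measurableSet_diagCone fun q ⟨hq, hdiag⟩ => ?_
  simpa [← hdiag] using hf hq zero_le_one zero_le_one

theorem exists_setIntegral_lowerCone (ν : Measure (ℝ × ℝ)) (hν : Integrable Prod.fst ν) :
    ∃ m : Measure ℝ, IsProbabilityMeasure m ∧ m (Ioo 0 1)ᶜ = 0 ∧
      ∀ f : ℝ → ℝ → ℝ, Measurable (Function.uncurry f) → PosHomogeneous f →
        ∫ q in lowerCone, f q.1 q.2 ∂ν = (∫ q in lowerCone, q.1 ∂ν) * ∫ t, f 1 t ∂m := by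
  have hpos : ∀ q ∈ lowerCone, 0 < q.1 := fun q hq => hq.1.trans hq.2
  obtain ⟨m, hm, hmt, hwm⟩ := exists_isProbabilityMeasure_setIntegral_mul_comp ν
    measurableSet_lowerCone measurable_fst (fun q hq => (hpos q hq).le) hν.integrableOn
    (φ := fun q => q.2 / q.1) (measurable_snd.div measurable_fst) measurableSet_Ioo
    ⟨1 / 2, by norm_num⟩ fun q hq => ⟨div_pos hq.1 (hpos q hq), (div_lt_one (hpos q hq)).2 hq.2⟩
  refine ⟨m, hm, hmt, fun f hf hhom => ?_⟩
  rw [← hwm (f 1) (hf.comp measurable_prodMk_left)]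
  refine setIntegral_congr_fun measurableSet_lowerCone fun q hq => ?_
  have h := hhom (hpos q hq) zero_le_one (div_pos hq.1 (hpos q hq)).le
  rw [mul_one, mul_div_cancel₀ _ (hpos q hq).ne'] at h
  exact h

theorem exists_setIntegral_upperCone (ν : Measure (ℝ × ℝ)) (hν : Integrable Prod.snd ν) :
    ∃ m : Measure ℝ, IsProbabilityMeasure m ∧ m (Ioo 0 1)ᶜ = 0 ∧
      ∀ f : ℝ → ℝ → ℝ, Measurable (Function.uncurry f) → PosHomogeneous f →
        ∫ q in upperCone, f q.1 q.2 ∂ν = (∫ q in upperCone, q.2 ∂ν) * ∫ t, f t 1 ∂m := by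
  let e : ℝ × ℝ ≃ᵐ ℝ × ℝ := MeasurableEquiv.prodComm
  obtain ⟨m, hm, hmt, hlower⟩ :=
    exists_setIntegral_lowerCone (ν.map e) ((integrable_map_equiv e _).2 hν)
  refine ⟨m, hm, hmt, fun f hf hhom => ?_⟩
  have := hlower (flip f) (hf.comp measurable_swap) fun c hc u v hu hv => hhom hc hv hu
  rwa [setIntegral_map_equiv, setIntegral_map_equiv] at this

theorem integral_eq_sum_setIntegral_cones {μ : Measure (ℝ × ℝ)}
    (hμ : ∀ᵐ q ∂μ, 0 ≤ q.1 ∧ 0 ≤ q.2) {f : ℝ → ℝ → ℝ} (hf : Integrable (Function.uncurry f) μ)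
    (hf₀ : ∀ t, 0 ≤ t → f t 0 = 0 ∧ f 0 t = 0) :
    ∫ q, f q.1 q.2 ∂μ = (∫ q in diagCone, f q.1 q.2 ∂μ) + (∫ q in lowerCone, f q.1 q.2 ∂μ) +
      ∫ q in upperCone, f q.1 q.2 ∂μ := by
  have hvanish : ∀ᵐ q ∂μ, q ∉ diagCone ∪ lowerCone ∪ upperCone → f q.1 q.2 = 0 := by
    filter_upwards [hμ] with q ⟨h₁, h₂⟩ hq
    rcases h₁.eq_or_lt with h₁ | h₁
    · rw [← h₁, (hf₀ _ h₂).2]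
    rcases h₂.eq_or_lt with h₂ | h₂
    · rw [← h₂, (hf₀ _ h₁.le).1]
    exact absurd (mem_cones_of_pos h₁ h₂) hq
  have hdisj_dl : Disjoint diagCone lowerCone :=
    disjoint_left.2 fun q ⟨_, h⟩ ⟨_, h'⟩ => h'.ne' h
  have hdisj_u : Disjoint (diagCone ∪ lowerCone) upperCone := by
    refine disjoint_union_left.2 ⟨disjoint_left.2 ?_, disjoint_left.2 ?_⟩
    · exact fun q ⟨_, h⟩ ⟨_, h'⟩ => h'.ne h
    · exact fun q ⟨_, h⟩ ⟨_, h'⟩ => h.not_gt h'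
  replace hf : Integrable (fun q : ℝ × ℝ => f q.1 q.2) μ := hf
  rw [← setIntegral_eq_integral_of_ae_compl_eq_zero hvanish,
    setIntegral_union hdisj_u measurableSet_upperCone hf.integrableOn hf.integrableOn,
    setIntegral_union hdisj_dl measurableSet_lowerCone hf.integrableOn hf.integrableOn]

theorem exists_cone_decomposition (μ : Measure (ℝ × ℝ)) (hμ : ∀ᵐ q ∂μ, 0 ≤ q.1 ∧ 0 ≤ q.2)
    (h₁ : Integrable Prod.fst μ) (h₂ : Integrable Prod.snd μ) :
    ∃ a₀ a₁ a₂ : ℝ, 0 ≤ a₀ ∧ 0 ≤ a₁ ∧ 0 ≤ a₂ ∧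
      ∃ m₁ m₂ : Measure ℝ, IsProbabilityMeasure m₁ ∧ IsProbabilityMeasure m₂ ∧
        m₁ (Ioo 0 1)ᶜ = 0 ∧ m₂ (Ioo 0 1)ᶜ = 0 ∧
        ∀ f : ℝ → ℝ → ℝ, Measurable (Function.uncurry f) →
          Integrable (Function.uncurry f) μ → PosHomogeneous f →
          (∀ t, 0 ≤ t → f t 0 = 0 ∧ f 0 t = 0) →
          ∫ q, f q.1 q.2 ∂μ = a₀ * f 1 1 + a₁ * ∫ t, f t 1 ∂m₁ + a₂ * ∫ t, f 1 t ∂m₂ := by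
  obtain ⟨m₁, hm₁, hm₁t, hupper⟩ := exists_setIntegral_upperCone μ h₂
  obtain ⟨m₂, hm₂, hm₂t, hlower⟩ := exists_setIntegral_lowerCone μ h₁
  refine ⟨∫ q in diagCone, q.1 ∂μ, ∫ q in upperCone, q.2 ∂μ, ∫ q in lowerCone, q.1 ∂μ,
    setIntegral_nonneg measurableSet_diagCone fun q hq => hq.1.le,
    setIntegral_nonneg measurableSet_upperCone fun q hq => (hq.1.trans hq.2).le,
    setIntegral_nonneg measurableSet_lowerCone fun q hq => (hq.1.trans hq.2).le,
    m₁, m₂, hm₁, hm₂, hm₁t, hm₂t, fun f hf hfi hhom hf₀ => ?_⟩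
  rw [integral_eq_sum_setIntegral_cones hμ hfi hf₀, setIntegral_diagCone μ hhom,
    hupper f hf hhom, hlower f hf hhom]
  ring

-- A measurable stand-in for a tail dependence function, which is unconstrained off `[0,∞)²`.
def quadrantExtend (f : ℝ → ℝ → ℝ) (u v : ℝ) : ℝ := f (max u 0) (max v 0)

theorem quadrantExtend_of_nonneg {f : ℝ → ℝ → ℝ} {u v : ℝ} (hu : 0 ≤ u) (hv : 0 ≤ v) :
    quadrantExtend f u v = f u v := by
  rw [quadrantExtend, max_eq_left hu, max_eq_left hv]

theorem integral_quadrantExtend {α : Type*} [MeasurableSpace α] {ν : Measure α}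
    {f : ℝ → ℝ → ℝ} {φ ψ : α → ℝ} (h : ∀ᵐ x ∂ν, 0 ≤ φ x ∧ 0 ≤ ψ x) :
    ∫ x, quadrantExtend f (φ x) (ψ x) ∂ν = ∫ x, f (φ x) (ψ x) ∂ν :=
  integral_congr_ae (h.mono fun _ hx => quadrantExtend_of_nonneg hx.1 hx.2)

theorem PosHomogeneous.quadrantExtend {f : ℝ → ℝ → ℝ} (hf : PosHomogeneous f) :
    PosHomogeneous (quadrantExtend f) := fun c hc u v hu hv => by
  rw [quadrantExtend_of_nonneg (by positivity) (by positivity), quadrantExtend_of_nonneg hu hv,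
    hf hc hu hv]

namespace HasTDF

variable {C Λ : ℝ → ℝ → ℝ}

theorem quadrantExtend_axes (hC : IsCopula C) (hT : HasTDF C Λ) (t : ℝ) (ht : 0 ≤ t) :
    quadrantExtend Λ t 0 = 0 ∧ quadrantExtend Λ 0 t = 0 := by
  rw [quadrantExtend_of_nonneg ht le_rfl, quadrantExtend_of_nonneg le_rfl ht]
  exact ⟨hT.apply_zero_right hC ht, hT.flip.apply_zero_right hC.flip ht⟩

theorem lipschitzWith_quadrantExtend (hC : IsCopula C) (hT : HasTDF C Λ) :
    LipschitzWith 2 (Function.uncurry (quadrantExtend Λ)) := by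
  refine LipschitzWith.of_dist_le_mul fun q q' => ?_
  have hdist₁ : |max q.1 0 - max q'.1 0| ≤ dist q q' :=
    (abs_max_sub_max_le_abs _ _ _).trans (le_max_left _ _)
  have hdist₂ : |max q.2 0 - max q'.2 0| ≤ dist q q' :=
    (abs_max_sub_max_le_abs _ _ _).trans (le_max_right _ _)
  have := hT.abs_sub_le hC (le_max_right q.1 0) (le_max_right q.2 0) (le_max_right q'.1 0)
    (le_max_right q'.2 0)
  rw [Real.dist_eq, NNReal.coe_ofNat]
  exact this.trans (by linarith)

theorem abs_quadrantExtend_le (hC : IsCopula C) (hT : HasTDF C Λ) (u v : ℝ) :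
    |quadrantExtend Λ u v| ≤ |u| + |v| := by
  have := hT.abs_sub_le hC (le_max_right u 0) (le_max_right v 0) le_rfl le_rfl
  rw [hT.apply_zero_right hC le_rfl, sub_zero, sub_zero, sub_zero] at this
  have hmax (x : ℝ) : |max x 0| ≤ |x| := by simpa using abs_max_sub_max_le_abs x 0 0
  exact this.trans (add_le_add (hmax u) (hmax v))

end HasTDF

theorem integrable_uncurry_of_abs_le {μ : Measure (ℝ × ℝ)} (h₁ : Integrable Prod.fst μ)
    (h₂ : Integrable Prod.snd μ) {f : ℝ → ℝ → ℝ} (hf : Measurable (Function.uncurry f))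
    (hb : ∀ u v, |f u v| ≤ |u| + |v|) : Integrable (Function.uncurry f) μ :=
  (h₁.abs.add h₂.abs).mono' hf.aestronglyMeasurable (ae_of_all _ fun q => hb q.1 q.2)

namespace IsTailGenMeasure

variable {μ : Measure (ℝ × ℝ)}

theorem ae_mem_unitSquare (hμ : IsTailGenMeasure μ) :
    ∀ᵐ q ∂μ, q ∈ Icc (0:ℝ) 1 ×ˢ Icc (0:ℝ) 1 :=
  ae_iff.2 hμ.2.1

theorem ae_nonneg (hμ : IsTailGenMeasure μ) : ∀ᵐ q ∂μ, 0 ≤ q.1 ∧ 0 ≤ q.2 :=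
  hμ.ae_mem_unitSquare.mono fun _ hq => ⟨hq.1.1, hq.2.1⟩

theorem integrable_fst (hμ : IsTailGenMeasure μ) : Integrable Prod.fst μ :=
  have := hμ.1
  .of_bound measurable_fst.aestronglyMeasurable 1 <| hμ.ae_mem_unitSquare.mono fun _ hq =>
    abs_le.2 ⟨by linarith [hq.1.1], hq.1.2⟩

theorem integrable_snd (hμ : IsTailGenMeasure μ) : Integrable Prod.snd μ :=
  have := hμ.1
  .of_bound measurable_snd.aestronglyMeasurable 1 <| hμ.ae_mem_unitSquare.mono fun _ hq =>
    abs_le.2 ⟨by linarith [hq.2.1], hq.2.2⟩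

theorem integrable_min (hμ : IsTailGenMeasure μ) :
    Integrable (Function.uncurry (min : ℝ → ℝ → ℝ)) μ :=
  integrable_uncurry_of_abs_le hμ.integrable_fst hμ.integrable_snd
    (measurable_fst.min measurable_snd) fun _ _ =>
      abs_min_le_max_abs_abs.trans (max_le_add_of_nonneg (abs_nonneg _) (abs_nonneg _))

theorem integral_min_pos (hμ : IsTailGenMeasure μ) : 0 < ∫ q, min q.1 q.2 ∂μ := by
  have := hμ.1
  refine (integral_pos_iff_support_of_nonneg_ae (hμ.ae_nonneg.mono fun q hq => le_min hq.1 hq.2)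
    hμ.integrable_min).2 (pos_iff_ne_zero.2 fun hsupp => hμ.2.2.ne ?_)
  have : ∀ᵐ q ∂μ, q ∈ {q : ℝ × ℝ | q.1 = 0 ∨ q.2 = 0} := by
    filter_upwards [measure_eq_zero_iff_ae_notMem.1 hsupp] with q hq
    rcases min_eq_iff.1 (Function.notMem_support.1 hq) with h | h
    exacts [Or.inl h.1, Or.inr h.1]
  exact (measure_congr (ae_eq_univ.2 (ae_iff.1 this))).trans measure_univ

end IsTailGenMeasure

theorem IsTailGenMeasure.exists_cone_representation {μ : Measure (ℝ × ℝ)}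
    (hμ : IsTailGenMeasure μ) :
    ∃ a₀ a₁ a₂ : ℝ, 0 ≤ a₀ ∧ 0 ≤ a₁ ∧ 0 ≤ a₂ ∧ 0 < a₀ + a₁ + a₂ ∧
      ∃ m₁ m₂ : Measure ℝ, IsProbabilityMeasure m₁ ∧ IsProbabilityMeasure m₂ ∧
        m₁ (Ioo 0 1)ᶜ = 0 ∧ m₂ (Ioo 0 1)ᶜ = 0 ∧
        ∫ q, min q.1 q.2 ∂μ = a₀ + a₁ * ∫ t, t ∂m₁ + a₂ * ∫ t, t ∂m₂ ∧
        ∀ C Λ : ℝ → ℝ → ℝ, IsCopula C → HasTDF C Λ →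
          ∫ q, Λ q.1 q.2 ∂μ = a₀ * Λ 1 1 + a₁ * ∫ t, Λ t 1 ∂m₁ + a₂ * ∫ t, Λ 1 t ∂m₂ := by
  obtain ⟨a₀, a₁, a₂, ha₀, ha₁, ha₂, m₁, m₂, hm₁, hm₂, hm₁t, hm₂t, hdec⟩ :=
    exists_cone_decomposition μ hμ.ae_nonneg hμ.integrable_fst hμ.integrable_snd
  have hm₁t' : ∀ᵐ t ∂m₁, t ∈ Ioo (0:ℝ) 1 := ae_iff.2 hm₁t
  have hm₂t' : ∀ᵐ t ∂m₂, t ∈ Ioo (0:ℝ) 1 := ae_iff.2 hm₂t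
  have hmin : ∫ q, min q.1 q.2 ∂μ = a₀ + a₁ * ∫ t, t ∂m₁ + a₂ * ∫ t, t ∂m₂ := by
    rw [hdec min (measurable_fst.min measurable_snd) hμ.integrable_min posHomogeneous_min
      fun t ht => ⟨min_eq_right ht, min_eq_left ht⟩, min_self, mul_one,
      integral_congr_ae (hm₁t'.mono fun t ht => min_eq_left ht.2.le),
      integral_congr_ae (hm₂t'.mono fun t ht => min_eq_right ht.2.le)]
  have hS : 0 < a₀ + a₁ + a₂ := by
    refine (add_nonneg (add_nonneg ha₀ ha₁) ha₂).lt_of_ne fun hS => ?_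
    have hpos := hμ.integral_min_pos
    rw [hmin, show a₀ = 0 by linarith, show a₁ = 0 by linarith, show a₂ = 0 by linarith] at hpos
    simp at hpos
  refine ⟨a₀, a₁, a₂, ha₀, ha₁, ha₂, hS, m₁, m₂, hm₁, hm₂, hm₁t, hm₂t, hmin,
    fun C Λ hC hT => ?_⟩
  have hΛ_meas := (hT.lipschitzWith_quadrantExtend hC).continuous.measurable
  have hΛ := hdec (quadrantExtend Λ) hΛ_meas
    (integrable_uncurry_of_abs_le hμ.integrable_fst hμ.integrable_snd hΛ_meas
      (hT.abs_quadrantExtend_le hC)) hT.posHomogeneous.quadrantExtend (hT.quadrantExtend_axes hC)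
  rwa [integral_quadrantExtend hμ.ae_nonneg, quadrantExtend_of_nonneg zero_le_one zero_le_one,
    integral_quadrantExtend (φ := fun t => t) (ψ := fun _ => 1)
      (hm₁t'.mono fun _ ht => ⟨ht.1.le, zero_le_one⟩),
    integral_quadrantExtend (φ := fun _ => 1) (ψ := fun t => t)
      (hm₂t'.mono fun _ ht => ⟨zero_le_one, ht.1.le⟩)] at hΛ

theorem tdm_linf_radial_representation (μ : Measure (ℝ × ℝ)) (hμ : IsTailGenMeasure μ) :
    ∃ w₀ w₁ w₂ : ℝ, 0 ≤ w₀ ∧ 0 ≤ w₁ ∧ 0 ≤ w₂ ∧ w₀ + w₁ + w₂ = 1 ∧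
      ∃ μ₁ μ₂ : Measure ℝ, IsProbabilityMeasure μ₁ ∧ IsProbabilityMeasure μ₂ ∧
        μ₁ ((Ioo (0:ℝ) 1)ᶜ) = 0 ∧ μ₂ ((Ioo (0:ℝ) 1)ᶜ) = 0 ∧
        ∀ C Λ : ℝ → ℝ → ℝ, IsCopula C → HasTDF C Λ →
          tdm Λ μ = (w₀ * Λ 1 1 + w₁ * ∫ t, Λ t 1 ∂μ₁ + w₂ * ∫ t, Λ 1 t ∂μ₂) /
                    (w₀ + w₁ * ∫ t, t ∂μ₁ + w₂ * ∫ t, t ∂μ₂) := by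
  obtain ⟨a₀, a₁, a₂, ha₀, ha₁, ha₂, hS, m₁, m₂, hm₁, hm₂, hm₁t, hm₂t, hmin, hΛ⟩ :=
    hμ.exists_cone_representation
  refine ⟨a₀ / (a₀ + a₁ + a₂), a₁ / (a₀ + a₁ + a₂), a₂ / (a₀ + a₁ + a₂), by positivity,
    by positivity, by positivity, by field_simp, m₁, m₂, hm₁, hm₂, hm₁t, hm₂t,
    fun C Λ hC hT => ?_⟩
  rw [tdm, hΛ C Λ hC hT, hmin]
  field_simp
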